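/- Sup-norm growth bound and resolvent estimate: set M_b := (|α|/Re α)^{d/2} and ω_b := −Re δ. Then for every bounded continuous v : ℝ^d → ℂ and every t ≥ 0, sup_{x∈ℝ^d} |[T(t)v](x)| ≤ M_b e^{ω_b t} sup_{x∈ℝ^d} |v(x)|; and for every λ ∈ ℂ with Re λ > ω_b and every bounded continuous g : ℝ^d → ℂ, the function v⋆(x) := ∫_0^∞ e^{−λt} [T(t)g](x) dt is defined for every x ∈ ℝ^d and satisfies sup_{x∈ℝ^d} |v⋆(x)| ≤ (M_b/(Re λ − ω_b)) · sup_{x∈ℝ^d} |g(x)|. -/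

import Mathlib

/-!
For `t > 0` the modulus of the kernel `H(x, ·, t)` is a real Gaussian centred at `e^{tS}x`,
with exponent `-(Re α / (4|α|²t)) |e^{tS}x - ξ|²` and prefactor `(4π|α|t)^{-d/2} e^{-Re δ t}`.
Its integral over `ξ` is therefore `(|α| / Re α)^{d/2} e^{-Re δ t}`, whatever `x` and `S`,
which bounds `T(t)v` pointwise; at `t = 0` the bound holds because `|α| ≥ Re α`.
Integrating this exponential bound against `|e^{-λt}| = e^{-Re λ t}` over `(0, ∞)` gives the
resolvent estimate.
-/

open MeasureTheory

/-- Rotation `e^{tS}x` given by the matrix exponential. -/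
noncomputable def ouRot (d : ℕ) (S : Matrix (Fin d) (Fin d) ℝ) (t : ℝ)
    (x : EuclideanSpace ℝ (Fin d)) : EuclideanSpace ℝ (Fin d) :=
  WithLp.toLp 2 (Matrix.mulVec (NormedSpace.exp (t • S)) x)

/-- The scalar complex Ornstein--Uhlenbeck kernel. -/
noncomputable def ouH (d : ℕ) (α δ : ℂ) (S : Matrix (Fin d) (Fin d) ℝ)
    (x ξ : EuclideanSpace ℝ (Fin d)) (t : ℝ) : ℂ :=
  (4 * (Real.pi : ℂ) * α * t) ^ (-(d : ℂ) / 2) *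
    Complex.exp (-(δ * t) - ((‖ouRot d S t x - ξ‖ ^ 2 : ℝ) : ℂ) / (4 * α * t))

/-- The Ornstein--Uhlenbeck semigroup `[T(t)v](x) = ∫ H(x,ξ,t) v(ξ) dξ` for `t > 0`,
and `T(0)v = v`. -/
noncomputable def ouT (d : ℕ) (α δ : ℂ) (S : Matrix (Fin d) (Fin d) ℝ) (t : ℝ)
    (v : EuclideanSpace ℝ (Fin d) → ℂ) (x : EuclideanSpace ℝ (Fin d)) : ℂ :=
  if t = 0 then v x else ∫ ξ : EuclideanSpace ℝ (Fin d), ouH d α δ S x ξ t * v ξ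

open Real Set

section Gaussian

variable {V : Type*} [NormedAddCommGroup V] [InnerProductSpace ℝ V] [FiniteDimensional ℝ V]
  [MeasurableSpace V] [BorelSpace V]

theorem integrable_rexp_neg_mul_sq_norm_sub {c : ℝ} (hc : 0 < c) (m : V) :
    Integrable (fun ξ : V => rexp (-c * ‖m - ξ‖ ^ 2)) := by
  refine (integrable_comp_sub_left (fun v : V => rexp (-c * ‖v‖ ^ 2)) m).mpr ?_
  refine (GaussianFourier.integrable_cexp_neg_mul_sq_norm_add
    (b := (c : ℂ)) (by simpa using hc) 0 (0 : V)).norm.congr (.of_forall fun v => ?_)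
  simp [Complex.norm_exp, ← Complex.ofReal_pow]

theorem integral_rexp_neg_mul_sq_norm_sub {c : ℝ} (hc : 0 < c) (m : V) :
    ∫ ξ : V, rexp (-c * ‖m - ξ‖ ^ 2) = (π / c) ^ (Module.finrank ℝ V / 2 : ℝ) := by
  rw [integral_sub_left_eq_self (fun v : V => rexp (-c * ‖v‖ ^ 2)),
    GaussianFourier.integral_rexp_neg_mul_sq_norm hc]

end Gaussian

theorem Complex.re_ofReal_div (r : ℝ) (z : ℂ) : ((r : ℂ) / z).re = r * z.re / ‖z‖ ^ 2 := by
  simp [Complex.div_re, Complex.normSq_eq_norm_sq]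

theorem one_le_rpow_norm_div_re {α : ℂ} (hα : 0 < α.re) {p : ℝ} (hp : 0 ≤ p) :
    1 ≤ (‖α‖ / α.re) ^ p :=
  one_le_rpow ((one_le_div hα).mpr (Complex.re_le_norm α)) hp

theorem Matrix.continuous_exp {m : Type*} [Fintype m] [DecidableEq m] :
    Continuous (NormedSpace.exp : Matrix m m ℝ → Matrix m m ℝ) := by
  let := Matrix.linftyOpNormedRing (n := m) (α := ℝ)
  let := Matrix.linftyOpNormedAlgebra (n := m) (R := ℝ) (α := ℝ)
  let : NormedAlgebra ℚ (Matrix m m ℝ) := NormedAlgebra.restrictScalars ℚ ℝ _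
  exact NormedSpace.exp_continuous

theorem continuous_ouRot (d : ℕ) (S : Matrix (Fin d) (Fin d) ℝ) (x : EuclideanSpace ℝ (Fin d)) :
    Continuous (fun t : ℝ => ouRot d S t x) :=
  (PiLp.continuous_toLp 2 _).comp
    ((Matrix.continuous_exp.comp (continuous_id.smul continuous_const)).matrix_mulVec
      continuous_const)

section Kernel

variable {d : ℕ} {α : ℂ} (δ : ℂ) (S : Matrix (Fin d) (Fin d) ℝ) (x : EuclideanSpace ℝ (Fin d))

theorem norm_ouH (ξ : EuclideanSpace ℝ (Fin d)) {t : ℝ} (ht : 0 < t) :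
    ‖ouH d α δ S x ξ t‖ = (4 * π * ‖α‖ * t) ^ (-(d : ℝ) / 2) * rexp (-δ.re * t) *
      rexp (-(α.re / (4 * ‖α‖ ^ 2 * t)) * ‖ouRot d S t x - ξ‖ ^ 2) := by
  have hexp : (-(d : ℂ) / 2) = ((-(d : ℝ) / 2 : ℝ) : ℂ) := by push_cast; ring
  have hbase : ‖4 * (π : ℂ) * α * t‖ = 4 * π * ‖α‖ * t := by
    simp [abs_of_pos pi_pos, abs_of_pos ht]
  have hre : (4 * α * (t : ℂ)).re = 4 * α.re * t := by simp
  have hnorm : ‖4 * α * (t : ℂ)‖ = 4 * ‖α‖ * t := by simp [abs_of_pos ht]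
  rw [ouH, norm_mul, hexp, Complex.norm_cpow_real, hbase, Complex.norm_exp, Complex.sub_re,
    Complex.re_ofReal_div, hre, hnorm, mul_assoc _ (rexp _), ← exp_add]
  congr 2
  simp only [Complex.neg_re, Complex.re_mul_ofReal]
  field_simp
  ring

theorem integrable_norm_ouH (hα : 0 < α.re) {t : ℝ} (ht : 0 < t) :
    Integrable (fun ξ => ‖ouH d α δ S x ξ t‖) := by
  have hα' : 0 < ‖α‖ := hα.trans_le (Complex.re_le_norm α)
  simp_rw [norm_ouH δ S x _ ht]
  exact (integrable_rexp_neg_mul_sq_norm_sub (by positivity) _).const_mul _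

theorem integral_norm_ouH (hα : 0 < α.re) {t : ℝ} (ht : 0 < t) :
    ∫ ξ, ‖ouH d α δ S x ξ t‖ = (‖α‖ / α.re) ^ ((d : ℝ) / 2) * rexp (-δ.re * t) := by
  have hα' : 0 < ‖α‖ := hα.trans_le (Complex.re_le_norm α)
  simp_rw [norm_ouH δ S x _ ht]
  rw [integral_const_mul, integral_rexp_neg_mul_sq_norm_sub (by positivity),
    finrank_euclideanSpace_fin, mul_right_comm, neg_div, rpow_neg (by positivity), inv_mul_eq_div,
    ← div_rpow (by positivity) (by positivity)]
  congr 2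
  field_simp

theorem norm_ouT_le (hα : 0 < α.re) {v : EuclideanSpace ℝ (Fin d) → ℂ} {K : ℝ}
    (hv : ∀ ξ, ‖v ξ‖ ≤ K) {t : ℝ} (ht : 0 ≤ t) :
    ‖ouT d α δ S t v x‖ ≤ (‖α‖ / α.re) ^ ((d : ℝ) / 2) * rexp (-δ.re * t) * K := by
  rcases ht.eq_or_lt with rfl | ht
  · have hK : 0 ≤ K := (norm_nonneg _).trans (hv x)
    simpa [ouT] using
      (hv x).trans (le_mul_of_one_le_left hK (one_le_rpow_norm_div_re hα (by positivity)))
  rw [ouT, if_neg ht.ne', ← integral_norm_ouH δ S x hα ht, ← integral_mul_const]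
  refine norm_integral_le_of_norm_le ((integrable_norm_ouH δ S x hα ht).mul_const K)
    (.of_forall fun ξ => ?_)
  rw [norm_mul]
  exact mul_le_mul_of_nonneg_left (hv ξ) (norm_nonneg _)

theorem measurable_ouT {v : EuclideanSpace ℝ (Fin d) → ℂ} (hv : Measurable v) :
    Measurable (fun t => ouT d α δ S t v x) := by
  have hrot := (continuous_ouRot d S x).measurable
  have hkernel : StronglyMeasurable
      (fun p : ℝ × EuclideanSpace ℝ (Fin d) => ouH d α δ S x p.2 p.1 * v p.2) := by
    unfold ouH
    apply Measurable.stronglyMeasurable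
    fun_prop
  exact Measurable.piecewise (measurableSet_singleton 0) measurable_const
    hkernel.integral_prod_right'.measurable

end Kernel

section Laplace

variable {E : Type*} [NormedAddCommGroup E] {f : ℝ → E} {C b : ℝ}

theorem integrableOn_Ioi_of_norm_le_mul_exp (hb : 0 < b)
    (hf : AEStronglyMeasurable f (volume.restrict (Ioi 0)))
    (hbound : ∀ t > 0, ‖f t‖ ≤ C * rexp (-b * t)) : IntegrableOn f (Ioi 0) :=
  ((exp_neg_integrableOn_Ioi 0 hb).const_mul C).mono' hf
    ((ae_restrict_mem measurableSet_Ioi).mono hbound)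

theorem norm_integral_Ioi_le_of_norm_le_mul_exp [NormedSpace ℝ E] (hb : 0 < b)
    (hbound : ∀ t > 0, ‖f t‖ ≤ C * rexp (-b * t)) : ‖∫ t in Ioi 0, f t‖ ≤ C / b := by
  have hexp : ∫ t in Ioi 0, C * rexp (-b * t) = C / b := by
    rw [integral_const_mul, integral_exp_mul_Ioi (neg_neg_of_pos hb)]
    field_simp
    simp
  exact hexp ▸ norm_integral_le_of_norm_le ((exp_neg_integrableOn_Ioi 0 hb).const_mul C)
    ((ae_restrict_mem measurableSet_Ioi).mono hbound)

end Laplace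

theorem ouSemigroup_sup_norm_growth_and_resolvent_general
    (d : ℕ) (α δ : ℂ) (hα : 0 < α.re)
    (S : Matrix (Fin d) (Fin d) ℝ) :
    (∀ v : EuclideanSpace ℝ (Fin d) → ℂ, Continuous v → (∃ C : ℝ, ∀ x, ‖v x‖ ≤ C) →
      ∀ t : ℝ, 0 ≤ t → ∀ x : EuclideanSpace ℝ (Fin d),
        ‖ouT d α δ S t v x‖
          ≤ (‖α‖ / α.re) ^ ((d : ℝ) / 2) * Real.exp (-δ.re * t) *
            ⨆ y : EuclideanSpace ℝ (Fin d), ‖v y‖) ∧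
    (∀ lam : ℂ, -δ.re < lam.re →
      ∀ g : EuclideanSpace ℝ (Fin d) → ℂ, Continuous g →
        (∃ C : ℝ, ∀ x, ‖g x‖ ≤ C) →
        ∀ x : EuclideanSpace ℝ (Fin d),
          IntegrableOn (fun t : ℝ => Complex.exp (-(lam * t)) * ouT d α δ S t g x)
            (Set.Ioi 0) ∧
          ‖∫ t in Set.Ioi (0:ℝ), Complex.exp (-(lam * t)) * ouT d α δ S t g x‖
            ≤ (‖α‖ / α.re) ^ ((d : ℝ) / 2) / (lam.re - (-δ.re)) *
              ⨆ y : EuclideanSpace ℝ (Fin d), ‖g y‖) := by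
  have le_iSup_norm {v : EuclideanSpace ℝ (Fin d) → ℂ} (hv : ∃ C : ℝ, ∀ x, ‖v x‖ ≤ C) (ξ) :
      ‖v ξ‖ ≤ ⨆ y, ‖v y‖ :=
    le_ciSup (hv.imp fun _ hC => forall_mem_range.2 hC) ξ
  refine ⟨fun v _ hv t ht x => norm_ouT_le δ S x hα (le_iSup_norm hv) ht, ?_⟩
  intro lam hlam g hg hgb x
  set M := (‖α‖ / α.re) ^ ((d : ℝ) / 2)
  set K := ⨆ y, ‖g y‖
  have hb : 0 < lam.re + δ.re := by linarith
  have hbound : ∀ t : ℝ, t > 0 → ‖Complex.exp (-(lam * t)) * ouT d α δ S t g x‖ ≤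
      M * K * rexp (-(lam.re + δ.re) * t) := fun t ht => calc
    _ = rexp (-lam.re * t) * ‖ouT d α δ S t g x‖ := by simp [Complex.norm_exp, neg_mul]
    _ ≤ rexp (-lam.re * t) * (M * rexp (-δ.re * t) * K) :=
      mul_le_mul_of_nonneg_left (norm_ouT_le δ S x hα (le_iSup_norm hgb) ht.le) (exp_nonneg _)
    _ = M * K * rexp (-(lam.re + δ.re) * t) := by
      rw [neg_add, add_mul, exp_add]; ring
  have hmeas : Measurable fun t : ℝ => Complex.exp (-(lam * t)) * ouT d α δ S t g x :=
    (by fun_prop : Continuous fun t : ℝ => Complex.exp (-(lam * t))).measurable.mul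
      (measurable_ouT δ S x hg.measurable)
  refine ⟨integrableOn_Ioi_of_norm_le_mul_exp hb hmeas.aestronglyMeasurable hbound, ?_⟩
  rw [sub_neg_eq_add, div_mul_eq_mul_div]
  exact norm_integral_Ioi_le_of_norm_le_mul_exp hb hbound

/-- sup-norm growth bound `‖T(t)v‖_∞ ≤ M_b e^{ω_b t}‖v‖_∞`
(with `M_b = (|α|/Re α)^{d/2}`, `ω_b = -Re δ`) and the corresponding resolvent estimate. -/
theorem ouSemigroup_sup_norm_growth_and_resolvent
    (d : ℕ) (hd : 1 ≤ d) (α δ : ℂ) (hα : 0 < α.re)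
    (S : Matrix (Fin d) (Fin d) ℝ) (hS : S.transpose = -S) :
    (∀ v : EuclideanSpace ℝ (Fin d) → ℂ, Continuous v → (∃ C : ℝ, ∀ x, ‖v x‖ ≤ C) →
      ∀ t : ℝ, 0 ≤ t → ∀ x : EuclideanSpace ℝ (Fin d),
        ‖ouT d α δ S t v x‖
          ≤ (‖α‖ / α.re) ^ ((d : ℝ) / 2) * Real.exp (-δ.re * t) *
            ⨆ y : EuclideanSpace ℝ (Fin d), ‖v y‖) ∧
    (∀ lam : ℂ, -δ.re < lam.re →
      ∀ g : EuclideanSpace ℝ (Fin d) → ℂ, Continuous g →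
        (∃ C : ℝ, ∀ x, ‖g x‖ ≤ C) →
        ∀ x : EuclideanSpace ℝ (Fin d),
          IntegrableOn (fun t : ℝ => Complex.exp (-(lam * t)) * ouT d α δ S t g x)
            (Set.Ioi 0) ∧
          ‖∫ t in Set.Ioi (0:ℝ), Complex.exp (-(lam * t)) * ouT d α δ S t g x‖
            ≤ (‖α‖ / α.re) ^ ((d : ℝ) / 2) / (lam.re - (-δ.re)) *
              ⨆ y : EuclideanSpace ℝ (Fin d), ‖g y‖) :=
  ouSemigroup_sup_norm_growth_and_resolvent_general d α δ hα S
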